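/- Let α ≥ 1. Define the hypergraph H_α with vertex set V = [k]^n and edge set E = ∪_{i∈[n]} { e : e = {(t, s_{-i}) : t ∈ S} for some s_{-i} ∈ [k]^{n-1} and some nonempty S ⊆ [k] that is upward closed under σ_i(s_{-i}) (i.e., a ∈ S and (a,b) ∈ σ_i(s_{-i}) imply b ∈ S), and ρ_i(t, s_{-i}) ≥ 1/α for every t ∈ S }. Then there exists a deterministic allocation rule x ∈ T_D(σ) with R(ρ,x) ≤ α if and only if H_α has a perfect matching, i.e., a set M ⊆ E of pairwise disjoint hyperedges whose union is V. -/

import Mathlib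

namespace Stmt10

variable {n k : ℕ}

/-- The profile obtained from the sub-profile `t` (signals of agents other than `i`)
by giving agent `i` the signal `a`. -/
def extendProf (i : Fin n) (a : Fin k) (t : {j : Fin n // j ≠ i} → Fin k) : Fin n → Fin k :=
  fun j => if h : j = i then a else t ⟨j, h⟩

/-- Induced performance ratio. -/
noncomputable def rho [NeZero n] (v : Fin n → (Fin n → Fin k) → ℝ) (i : Fin n)
    (s : Fin n → Fin k) : ℝ :=
  v i s / Finset.univ.sup' Finset.univ_nonempty (fun j => v j s)

/-- Membership in the truthful polytope `T(σ)` for the orderings induced by `v`. -/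
def InT (v x : Fin n → (Fin n → Fin k) → ℝ) : Prop :=
  (∀ i s, 0 ≤ x i s ∧ x i s ≤ 1) ∧ (∀ s, ∑ i, x i s = 1) ∧
  (∀ (i : Fin n) (s : Fin n → Fin k) (a b : Fin k),
    v i (Function.update s i a) < v i (Function.update s i b) →
    x i (Function.update s i a) ≤ x i (Function.update s i b))

/-- `e` is a hyperedge of the hypergraph `H_α`. -/
def IsEdge [NeZero n] (v : Fin n → (Fin n → Fin k) → ℝ) (α : ℝ)
    (e : Set (Fin n → Fin k)) : Prop :=
  ∃ (i : Fin n) (t : {j : Fin n // j ≠ i} → Fin k) (S : Set (Fin k)),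
    S.Nonempty ∧
    (∀ a ∈ S, ∀ b : Fin k,
      v i (extendProf i a t) < v i (extendProf i b t) → b ∈ S) ∧
    (∀ a ∈ S, 1 / α ≤ rho v i (extendProf i a t)) ∧
    e = (fun a => extendProf i a t) '' S

/-!
A deterministic allocation rule is the same thing as a winner map `w : [k]^n → [n]`. Truthfulness
says that every winning set `{a | w (a, s_{-i}) = i}` is upward closed under `σ_i(s_{-i})`, and
`R(ρ, x) ≤ α` says that `ρ_{w s}(s) ≥ 1/α` at every profile. Hence for a truthful winner map with this
bound the nonempty winning sets, placed on the lines `{(a, s_{-i})}`, are hyperedges of `H_α`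
partitioning `V`. Conversely, labelling every edge of a perfect matching with an agent that
witnesses it being an edge, and letting each profile be won by the label of its edge, gives such a
winner map.
-/

open Function

variable {n k : ℕ}

lemma extendProf_eq_update (i : Fin n) (a : Fin k) (s : Fin n → Fin k) :
    extendProf i a (fun j => s j.1) = update s i a := by
  funext j
  by_cases h : j = i
  · subst h; simp [extendProf]
  · simp [extendProf, h]

lemma update_extendProf (i : Fin n) (a b : Fin k) (t : {j : Fin n // j ≠ i} → Fin k) :
    update (extendProf i a t) i b = extendProf i b t := by
  funext j
  by_cases h : j = i
  · subst h; simp [extendProf]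
  · simp [extendProf, h]

lemma rho_pos [NeZero n] {v : Fin n → (Fin n → Fin k) → ℝ} (hv : ∀ i s, 0 < v i s)
    (i : Fin n) (s : Fin n → Fin k) : 0 < rho v i s :=
  div_pos (hv i s) ((hv i s).trans_le (Finset.le_sup' (fun j => v j s) (Finset.mem_univ i)))

def IsTruthfulWinner (v : Fin n → (Fin n → Fin k) → ℝ) (w : (Fin n → Fin k) → Fin n) : Prop :=
  ∀ (i : Fin n) (s : Fin n → Fin k) (a b : Fin k),
    v i (update s i a) < v i (update s i b) → w (update s i a) = i → w (update s i b) = i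

def winnerRule (w : (Fin n → Fin k) → Fin n) : Fin n → (Fin n → Fin k) → ℝ :=
  fun i s => if w s = i then 1 else 0

lemma exists_winnerRule_eq {x : Fin n → (Fin n → Fin k) → ℝ}
    (hdet : ∀ i s, x i s = 0 ∨ x i s = 1) (hsum : ∀ s, ∑ i, x i s = 1) :
    ∃ w, winnerRule w = x := by
  have hwin : ∀ s, ∃ i, x i s = 1 := by
    intro s
    by_contra! h
    simpa [fun i => (hdet i s).resolve_right (h i)] using hsum s
  choose w hw using hwin
  refine ⟨w, funext₂ fun i s => ?_⟩
  have hnonneg : ∀ j, 0 ≤ x j s := fun j => by rcases hdet j s with h | h <;> simp [h]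
  have hrest : ∑ j ∈ Finset.univ.erase (w s), x j s = 0 := by
    have := Finset.add_sum_erase Finset.univ (x · s) (Finset.mem_univ (w s))
    rw [hw s, hsum s] at this
    linarith
  rw [Finset.sum_eq_zero_iff_of_nonneg fun j _ => hnonneg j] at hrest
  by_cases h : w s = i
  · simp [winnerRule, h, ← hw s]
  · simp [winnerRule, h, hrest i (Finset.mem_erase.mpr ⟨Ne.symm h, Finset.mem_univ i⟩)]

lemma inT_winnerRule_iff (v : Fin n → (Fin n → Fin k) → ℝ) (w : (Fin n → Fin k) → Fin n) :
    InT v (winnerRule w) ↔ IsTruthfulWinner v w := by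
  have hmono : ∀ p q : Prop, [Decidable p] → [Decidable q] →
      ((if p then (1 : ℝ) else 0) ≤ if q then 1 else 0) ↔ (p → q) := by
    intro p q _ _; split_ifs <;> simp_all
  refine ⟨fun h i s a b hlt => (hmono _ _).mp (h.2.2 i s a b hlt), fun h => ⟨?_, ?_, ?_⟩⟩
  · intro i s; unfold winnerRule; split_ifs <;> norm_num
  · intro s; simp [winnerRule]
  · exact fun i s a b hlt => (hmono _ _).mpr (h i s a b hlt)

lemma sum_winnerRule_div (w : (Fin n → Fin k) → Fin n) (s : Fin n → Fin k) (f : Fin n → ℝ) :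
    ∑ i, winnerRule w i s / f i = 1 / f (w s) := by
  simp [winnerRule, ite_div]

lemma ratio_winnerRule_le_iff [NeZero n] [NeZero k] {α : ℝ} (hα : 0 < α)
    {v : Fin n → (Fin n → Fin k) → ℝ} (hv : ∀ i s, 0 < v i s) (w : (Fin n → Fin k) → Fin n) :
    Finset.univ.sup' Finset.univ_nonempty
        (fun s : Fin n → Fin k => ∑ i, winnerRule w i s / rho v i s) ≤ α ↔
      ∀ s, 1 / α ≤ rho v (w s) s := by
  simp only [Finset.sup'_le_iff, Finset.mem_univ, true_imp_iff, sum_winnerRule_div]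
  exact forall_congr' fun s => one_div_le (rho_pos hv _ s) hα

lemma exists_deterministic_iff_exists_winner [NeZero n] [NeZero k] {α : ℝ} (hα : 0 < α)
    {v : Fin n → (Fin n → Fin k) → ℝ} (hv : ∀ i s, 0 < v i s) :
    (∃ x : Fin n → (Fin n → Fin k) → ℝ, InT v x ∧ (∀ i s, x i s = 0 ∨ x i s = 1) ∧
      Finset.univ.sup' Finset.univ_nonempty
        (fun s : Fin n → Fin k => ∑ i, x i s / rho v i s) ≤ α) ↔
    ∃ w, IsTruthfulWinner v w ∧ ∀ s, 1 / α ≤ rho v (w s) s := by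
  constructor
  · rintro ⟨x, hT, hdet, hR⟩
    obtain ⟨w, rfl⟩ := exists_winnerRule_eq hdet hT.2.1
    exact ⟨w, (inT_winnerRule_iff v w).mp hT, (ratio_winnerRule_le_iff hα hv w).mp hR⟩
  · rintro ⟨w, hT, hR⟩
    refine ⟨winnerRule w, (inT_winnerRule_iff v w).mpr hT, fun i s => ?_,
      (ratio_winnerRule_le_iff hα hv w).mpr hR⟩
    unfold winnerRule; split_ifs <;> simp

def winnerCell (w : (Fin n → Fin k) → Fin n) (s : Fin n → Fin k) : Set (Fin n → Fin k) :=
  update s (w s) '' {a | w (update s (w s) a) = w s}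

lemma mem_winnerCell_self (w : (Fin n → Fin k) → Fin n) (s : Fin n → Fin k) :
    s ∈ winnerCell w s :=
  ⟨s (w s), by simp, update_eq_self _ _⟩

lemma winnerCell_eq_of_mem {w : (Fin n → Fin k) → Fin n} {s s' : Fin n → Fin k}
    (h : s' ∈ winnerCell w s) : winnerCell w s' = winnerCell w s := by
  obtain ⟨a, ha, rfl⟩ := h
  replace ha : w (update s (w s) a) = w s := ha
  simp only [winnerCell, ha, update_idem]

section Matching

variable [NeZero n] {v : Fin n → (Fin n → Fin k) → ℝ} {α : ℝ}

lemma IsEdge.exists_agent {e : Set (Fin n → Fin k)} (he : IsEdge v α e) :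
    ∃ i, (∀ s ∈ e, ∀ b, v i s < v i (update s i b) → update s i b ∈ e) ∧
      ∀ s ∈ e, 1 / α ≤ rho v i s := by
  obtain ⟨i, t, S, -, hup, hrho, rfl⟩ := he
  refine ⟨i, ?_, ?_⟩
  · rintro _ ⟨a, ha, rfl⟩ b hlt
    rw [update_extendProf] at hlt ⊢
    exact ⟨b, hup a ha b hlt, rfl⟩
  · rintro _ ⟨a, ha, rfl⟩
    exact hrho a ha

lemma isEdge_winnerCell {w : (Fin n → Fin k) → Fin n} (hw : IsTruthfulWinner v w)
    (hR : ∀ s, 1 / α ≤ rho v (w s) s) (s : Fin n → Fin k) : IsEdge v α (winnerCell w s) := by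
  refine ⟨w s, fun j => s j.1, {a | w (update s (w s) a) = w s},
    ⟨s (w s), by simp⟩, fun a ha b hlt => ?_, fun a ha => ?_, ?_⟩
  · rw [extendProf_eq_update, extendProf_eq_update] at hlt
    exact hw _ s a b hlt ha
  · replace ha : w (update s (w s) a) = w s := ha
    have := hR (update s (w s) a)
    rwa [ha, ← extendProf_eq_update] at this
  · simp only [winnerCell, extendProf_eq_update]

lemma exists_perfectMatching_of_winner {w : (Fin n → Fin k) → Fin n} (hw : IsTruthfulWinner v w)
    (hR : ∀ s, 1 / α ≤ rho v (w s) s) :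
    ∃ M : Set (Set (Fin n → Fin k)),
      (∀ e ∈ M, IsEdge v α e) ∧ M.PairwiseDisjoint id ∧ ⋃₀ M = Set.univ := by
  refine ⟨Set.range (winnerCell w), ?_, ?_, ?_⟩
  · rintro _ ⟨s, rfl⟩
    exact isEdge_winnerCell hw hR s
  · rintro _ ⟨s₁, rfl⟩ _ ⟨s₂, rfl⟩ hne
    refine Set.disjoint_left.mpr fun s h₁ h₂ => hne ?_
    exact (winnerCell_eq_of_mem h₁).symm.trans (winnerCell_eq_of_mem h₂)
  · exact Set.eq_univ_of_forall fun s => ⟨_, ⟨s, rfl⟩, mem_winnerCell_self w s⟩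

lemma exists_winner_of_perfectMatching {M : Set (Set (Fin n → Fin k))}
    (hedge : ∀ e ∈ M, IsEdge v α e) (hdisj : M.PairwiseDisjoint id) (hcov : ⋃₀ M = Set.univ) :
    ∃ w, IsTruthfulWinner v w ∧ ∀ s, 1 / α ≤ rho v (w s) s := by
  choose E hEM hsE using fun s => Set.mem_sUnion.mp (hcov ▸ Set.mem_univ s)
  have hE : ∀ {s e}, e ∈ M → s ∈ e → E s = e := fun he hs =>
    hdisj.elim_set (hEM _) he _ (hsE _) hs
  choose! agent hup hrho using fun e he => (hedge e he).exists_agent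
  refine ⟨fun s => agent (E s), fun i s a b hlt ha => ?_, fun s => hrho _ (hEM s) s (hsE s)⟩
  simp only at ha ⊢
  have hb := hup _ (hEM _) _ (hsE (update s i a)) b
  simp only [ha, update_idem] at hb
  rw [hE (hEM _) (hb hlt), ha]

end Matching

theorem stmt10 [NeZero n] [NeZero k] (α : ℝ) (hα : 1 ≤ α)
    (v : Fin n → (Fin n → Fin k) → ℝ) (hv : ∀ i s, 0 < v i s) :
    (∃ x : Fin n → (Fin n → Fin k) → ℝ, InT v x ∧ (∀ i s, x i s = 0 ∨ x i s = 1) ∧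
      Finset.univ.sup' Finset.univ_nonempty
        (fun s : Fin n → Fin k => ∑ i, x i s / rho v i s) ≤ α) ↔
    (∃ M : Set (Set (Fin n → Fin k)),
      (∀ e ∈ M, IsEdge v α e) ∧
      M.PairwiseDisjoint id ∧
      ⋃₀ M = Set.univ) := by
  rw [exists_deterministic_iff_exists_winner (zero_lt_one.trans_le hα) hv]
  constructor
  · rintro ⟨w, hw, hR⟩
    exact exists_perfectMatching_of_winner hw hR
  · rintro ⟨M, hedge, hdisj, hcov⟩
    exact exists_winner_of_perfectMatching hedge hdisj hcov

end Stmt10
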